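/- arXiv:2401.08550 — 5 statements merged into one kernel-verified Lean document; each statement's English description precedes it below -/
import Mathlib

section
/- Suppose the 2^q-dimensional Hermitian matrix H is a (q, η, ε)-embedding of the 2^q-dimensional Hermitian matrix A with embedding subspace S (so A = P_S A P_S). Then for every fixed evolution time t ≥ 0, one has ‖P_S exp(−i H t) P_S − P_S exp(−i A t) P_S‖ ≤ (2 η ‖H‖ + ε) t. -/
/-!
Rotating by `U`, the embedding makes `H' = U† H U` block upper triangular with respect to `P_S`,
so `P_S exp(-iH't) P_S = P_S exp(-iBt) P_S` with `B = P_S H' P_S`. The error then splits into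
`‖exp(-iHt) - exp(-iH't)‖ + ‖exp(-iBt) - exp(-iAt)‖`. For skew-adjoint `a, b` the derivative
of `s ↦ exp(s a) exp((1 - s) b)` is `exp(s a) (a - b) exp((1 - s) b)`, whose outer factors are
unitary, so `‖exp a - exp b‖ ≤ ‖a - b‖`, i.e. `‖exp(-iXt) - exp(-iYt)‖ ≤ t ‖X - Y‖`. Finally `‖H - U† H U‖ ≤ 2 ‖1 - U‖ ‖H‖`.
-/

open Matrix
open scoped Matrix.Norms.L2Operator

/-- `H` is a `(q, η, ε)`-embedding of `A` with embedding subspace given by the orthogonal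
projection `PS`, witnessed by the unitary `U`. -/
def IsHamiltonianEmbedding {N : ℕ} (PS U H A : Matrix (Fin N) (Fin N) ℂ) (η ε : ℝ) : Prop :=
  U ∈ Matrix.unitaryGroup (Fin N) ℂ ∧
  PS * (Uᴴ * H * U) * (1 - PS) = 0 ∧
  ‖(1 : Matrix (Fin N) (Fin N) ℂ) - U‖ ≤ η ∧
  ‖PS * (Uᴴ * H * U) * PS - A‖ ≤ ε

open NormedSpace Complex

section Duhamel

variable {𝔸 : Type*} [NormedRing 𝔸] [NormedAlgebra ℝ 𝔸] [CompleteSpace 𝔸]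

theorem hasDerivAt_exp_smul_mul_exp_one_sub_smul (a b : 𝔸) (s : ℝ) :
    HasDerivAt (fun u : ℝ => exp (u • a) * exp ((1 - u) • b))
      (exp (s • a) * (a - b) * exp ((1 - s) • b)) s := by
  have hb : HasDerivAt (fun u : ℝ => exp ((1 - u) • b)) ((-1 : ℝ) • (exp ((1 - s) • b) * b)) s :=
    (hasDerivAt_exp_smul_const b (1 - s)).scomp s (by simpa using (hasDerivAt_id s).const_sub 1)
  refine ((hasDerivAt_exp_smul_const a s).mul hb).congr_deriv ?_
  rw [neg_one_smul, ← ((Commute.refl b).smul_right (1 - s)).exp_right.eq]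
  noncomm_ring

theorem norm_exp_sub_exp_le_of_forall_norm_le {a b : 𝔸} {C : ℝ}
    (hC : ∀ s : ℝ, ‖exp (s • a) * (a - b) * exp ((1 - s) • b)‖ ≤ C) :
    ‖exp a - exp b‖ ≤ C := by
  have := (convex_univ (𝕜 := ℝ) (E := ℝ)).norm_image_sub_le_of_norm_hasDerivWithin_le
    (fun s _ => (hasDerivAt_exp_smul_mul_exp_one_sub_smul a b s).hasDerivWithinAt)
    (fun s _ => hC s) (Set.mem_univ 0) (Set.mem_univ 1)
  simpa using this

end Duhamel

section

variable {E : Type*} [NormedRing E] [StarRing E] [CStarRing E] [NormedAlgebra ℝ E]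
  [StarModule ℝ E] [CompleteSpace E]

theorem norm_exp_sub_exp_le_of_mem_skewAdjoint {a b : E} (ha : a ∈ skewAdjoint E)
    (hb : b ∈ skewAdjoint E) : ‖exp a - exp b‖ ≤ ‖a - b‖ := by
  -- Mathlib's facts on `exp` in noncommutative algebras are stated over `ℚ`
  let : NormedAlgebra ℚ E := .restrictScalars ℚ ℝ E
  refine norm_exp_sub_exp_le_of_forall_norm_le fun s => le_of_eq ?_
  rw [CStarRing.norm_mul_mem_unitary _
      (exp_mem_unitary_of_mem_skewAdjoint (skewAdjoint.smul_mem (1 - s) hb)),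
    CStarRing.norm_mem_unitary_mul _
      (exp_mem_unitary_of_mem_skewAdjoint (skewAdjoint.smul_mem s ha))]

end

section

variable {E : Type*} [NormedRing E] [StarRing E] [CStarRing E]

theorem norm_sub_star_mul_mul_le {u : E} (hu : u ∈ unitary E) (h : E) :
    ‖h - star u * h * u‖ ≤ 2 * ‖1 - u‖ * ‖h‖ := by
  have hcomm : h - star u * h * u = star u * (h * (1 - u) - (1 - u) * h) :=
    calc h - star u * h * u = star u * u * h - star u * h * u := by
          rw [Unitary.star_mul_self_of_mem hu, one_mul]
      _ = star u * (h * (1 - u) - (1 - u) * h) := by noncomm_ring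
  calc ‖h - star u * h * u‖ = ‖h * (1 - u) - (1 - u) * h‖ := by
        rw [hcomm, CStarRing.norm_mem_unitary_mul _ (Unitary.star_mem hu)]
    _ ≤ ‖h‖ * ‖1 - u‖ + ‖1 - u‖ * ‖h‖ :=
        (norm_sub_le _ _).trans (add_le_add (norm_mul_le _ _) (norm_mul_le _ _))
    _ = 2 * ‖1 - u‖ * ‖h‖ := by ring

theorem IsStarProjection.norm_mul_mul_le {p : E} (hp : IsStarProjection p) (x : E) :
    ‖p * x * p‖ ≤ ‖x‖ :=
  calc ‖p * x * p‖ ≤ ‖p‖ * ‖x‖ * ‖p‖ := norm_mul₃_le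
    _ ≤ 1 * ‖x‖ * 1 := by gcongr <;> exact hp.norm_le
    _ = ‖x‖ := by ring

end

theorem IsIdempotentElem.mul_exp_mul_eq_of_mul_mul_one_sub_eq_zero {𝔸 : Type*} [NormedRing 𝔸]
    [NormedAlgebra ℚ 𝔸] [CompleteSpace 𝔸] {p x : 𝔸} (hp : IsIdempotentElem p)
    (hx : p * x * (1 - p) = 0) :
    p * exp x * p = p * exp (p * x * p) * p := by
  have hpx : SemiconjBy p x (p * x * p) := by
    rw [SemiconjBy, mul_assoc _ p p, hp.eq, ← sub_eq_zero, ← hx]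
    noncomm_ring
  have hpxp : SemiconjBy p (p * x * p) (p * x * p) := by
    rw [SemiconjBy, mul_assoc _ p p, hp.eq, ← mul_assoc, ← mul_assoc, hp.eq]
  rw [hpx.exp_right.eq, hpxp.exp_right.eq]

section CStarAlgebra

variable {A : Type*} [CStarAlgebra A]

theorem norm_exp_sub_exp_le_of_isSelfAdjoint {h k : A} (hh : IsSelfAdjoint h)
    (hk : IsSelfAdjoint k) {t : ℝ} (ht : 0 ≤ t) :
    ‖exp ((-(I * t)) • h) - exp ((-(I * t)) • k)‖ ≤ t * ‖h - k‖ := by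
  have hc : -(I * t) ∈ skewAdjoint ℂ := by simp [skewAdjoint.mem_iff]
  calc _ ≤ ‖(-(I * t)) • h - (-(I * t)) • k‖ :=
        norm_exp_sub_exp_le_of_mem_skewAdjoint (hh.smul_mem_skewAdjoint hc)
          (hk.smul_mem_skewAdjoint hc)
    _ = t * ‖h - k‖ := by
        rw [← smul_sub, norm_smul]
        simp [abs_of_nonneg ht]

theorem norm_mul_exp_mul_sub_mul_exp_mul_le {p u h a : A} (hp : IsStarProjection p)
    (hu : u ∈ unitary A) (hh : IsSelfAdjoint h) (ha : IsSelfAdjoint a)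
    (hblock : p * (star u * h * u) * (1 - p) = 0) {t : ℝ} (ht : 0 ≤ t) :
    ‖p * exp ((-(I * t)) • h) * p - p * exp ((-(I * t)) • a) * p‖ ≤
      (2 * ‖1 - u‖ * ‖h‖ + ‖p * (star u * h * u) * p - a‖) * t := by
  let : NormedAlgebra ℚ A := .restrictScalars ℚ ℂ A
  set c : ℂ := -(I * t)
  set h' := star u * h * u
  have hh' : IsSelfAdjoint h' := hh.conjugate' u
  have hb : IsSelfAdjoint (p * h' * p) := by
    simpa only [hp.isSelfAdjoint.star_eq] using hh'.conjugate p
  have hcompress : p * exp (c • h') * p = p * exp (c • (p * h' * p)) * p := by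
    rw [hp.isIdempotentElem.mul_exp_mul_eq_of_mul_mul_one_sub_eq_zero
      (by rw [mul_smul_comm, smul_mul_assoc, hblock, smul_zero]),
      mul_smul_comm, smul_mul_assoc]
  have hsplit : p * exp (c • h) * p - p * exp (c • a) * p =
      p * (exp (c • h) - exp (c • h')) * p + p * (exp (c • (p * h' * p)) - exp (c • a)) * p := by
    rw [mul_sub, sub_mul, mul_sub, sub_mul, ← hcompress]
    abel
  calc _ ≤ ‖exp (c • h) - exp (c • h')‖ + ‖exp (c • (p * h' * p)) - exp (c • a)‖ := by
        rw [hsplit]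
        exact (norm_add_le _ _).trans (add_le_add (hp.norm_mul_mul_le _) (hp.norm_mul_mul_le _))
    _ ≤ t * ‖h - h'‖ + t * ‖p * h' * p - a‖ :=
        add_le_add (norm_exp_sub_exp_le_of_isSelfAdjoint hh hh' ht)
          (norm_exp_sub_exp_le_of_isSelfAdjoint hb ha ht)
    _ ≤ t * (2 * ‖1 - u‖ * ‖h‖) + t * ‖p * h' * p - a‖ := by
        gcongr
        exact norm_sub_star_mul_mul_le hu h
    _ = _ := by ring

end CStarAlgebra

theorem embedding_simulation_error_general (q : ℕ) (η ε : ℝ)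
    (PS H A : Matrix (Fin (2 ^ q)) (Fin (2 ^ q)) ℂ)
    (hPSherm : PS.IsHermitian) (hPSproj : PS * PS = PS)
    (hH : H.IsHermitian) (hA : A.IsHermitian)
    (hemb : ∃ U, IsHamiltonianEmbedding PS U H A η ε)
    (t : ℝ) (ht : 0 ≤ t) :
    ‖PS * NormedSpace.exp ((-(Complex.I * (t : ℂ))) • H) * PS -
        PS * NormedSpace.exp ((-(Complex.I * (t : ℂ))) • A) * PS‖ ≤
      (2 * η * ‖H‖ + ε) * t := by
  obtain ⟨U, hU, hblock, hUη, hε⟩ := hemb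
  have hPS : IsStarProjection PS := ⟨hPSproj, hPSherm⟩
  calc _ ≤ (2 * ‖1 - U‖ * ‖H‖ + ‖PS * (Uᴴ * H * U) * PS - A‖) * t :=
        norm_mul_exp_mul_sub_mul_exp_mul_le hPS hU hH hA hblock ht
    _ ≤ (2 * η * ‖H‖ + ε) * t := by gcongr

/-- **Hamiltonian simulation with Hamiltonian embedding.** If the Hermitian matrix `H` on
`ℂ^(2^q)` is a `(q, η, ε)`-embedding of the Hermitian matrix `A` (with `A = P_S A P_S`), then
for every `t ≥ 0`,
`‖P_S exp(-iHt) P_S - P_S exp(-iAt) P_S‖ ≤ (2η‖H‖ + ε) t`. -/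
theorem embedding_simulation_error (q : ℕ) (η ε : ℝ) (hη : 0 < η) (hε : 0 < ε)
    (PS H A : Matrix (Fin (2 ^ q)) (Fin (2 ^ q)) ℂ)
    (hPSherm : PS.IsHermitian) (hPSproj : PS * PS = PS)
    (hH : H.IsHermitian) (hA : A.IsHermitian) (hAS : A = PS * A * PS)
    (hemb : ∃ U, IsHamiltonianEmbedding PS U H A η ε)
    (t : ℝ) (ht : 0 ≤ t) :
    ‖PS * NormedSpace.exp ((-(Complex.I * (t : ℂ))) • H) * PS -
        PS * NormedSpace.exp ((-(Complex.I * (t : ℂ))) • A) * PS‖ ≤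
      (2 * η * ‖H‖ + ε) * t :=
  embedding_simulation_error_general q η ε PS H A hPSherm hPSproj hH hA hemb t ht
end

section
/- (Unary embedding) Let n ≥ 2 and let A be an n × n complex Hermitian matrix, with diagonal entries α_j = A_{jj} for j = 1,…,n and off-diagonal entries A_{jk} = α_{j,k} + i β_{j,k} (α_{j,k}, β_{j,k} real) for 1 ≤ j < k ≤ n. Define the (n−1)-qubit operator Q_A = α_1 I + Σ_{j=2}^{n} (α_j − α_{j−1}) n̂_{j−1} + Σ_{1 ≤ j < k ≤ n} X_{k−1} ⊗ ⋯ ⊗ X_{j+1} ⊗ (α_{j,k} X_j − β_{j,k} Y_j), where the Pauli string in the last sum acts as X on qubits j+1,…,k−1 and as α_{j,k} X − β_{j,k} Y on qubit j (identity on all other qubits). Then for all ℓ, m ∈ {1,…,n}, ⟨u_ℓ| Q_A |u_m⟩ = A_{ℓm}, where |u_j⟩ is the unary codeword basis state. -/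
open Matrix

/-- The single-qubit Pauli `X` matrix `[[0,1],[1,0]]`, with basis indexed by `Bool`
(`false = |0⟩`, `true = |1⟩`). -/
def pauliX : Matrix Bool Bool ℂ := fun s t => if s = t then 0 else 1

/-- The single-qubit Pauli `Y` matrix `[[0,-i],[i,0]]`. -/
def pauliY : Matrix Bool Bool ℂ :=
  fun s t => if s = t then 0 else if s then Complex.I else -Complex.I

/-- The single-qubit Pauli `Z` matrix `[[1,0],[0,-1]]`. -/
def pauliZ : Matrix Bool Bool ℂ := fun s t => if s = t then (if s then -1 else 1) else 0

/-- The single-qubit number operator `n̂ = (I - Z)/2`. -/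
noncomputable def numOp : Matrix Bool Bool ℂ := (2⁻¹ : ℂ) • (1 - pauliZ)

/-- The `m`-fold tensor (Kronecker) product `f 0 ⊗ f 1 ⊗ ⋯ ⊗ f (m-1)` of single-qubit
operators, as a matrix on `(ℂ²)^{⊗ m}` whose computational basis is indexed by bitstrings
`Fin m → Bool`. -/
def tensorOp {m : ℕ} (f : Fin m → Matrix Bool Bool ℂ) :
    Matrix (Fin m → Bool) (Fin m → Bool) ℂ :=
  fun s t => ∏ i, f i (s i) (t i)

/-- The single-qubit operator `M` acting on qubit `j` (0-indexed), tensored with the identity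
on all other qubits. -/
def siteOp {m : ℕ} (M : Matrix Bool Bool ℂ) (j : Fin m) :
    Matrix (Fin m → Bool) (Fin m → Bool) ℂ :=
  tensorOp fun i => if i = j then M else 1

/-- The computational basis vector labeled by the bitstring `w`. -/
def basisVec {m : ℕ} (w : Fin m → Bool) : (Fin m → Bool) → ℂ := fun s => if s = w then 1 else 0
/-- The unary codeword `u_j` on `n-1` qubits: for `j : Fin n` (representing the 1-indexed
integer `j+1`), the lowest `j` bits are `1` and the rest are `0`. -/
def unaryWord (n : ℕ) (j : Fin n) : Fin (n - 1) → Bool := fun i => decide ((i : ℕ) < (j : ℕ))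

/-- The Pauli-string term of the unary embedding associated to the matrix entry `A l m`
(`l < m`, 0-indexed, corresponding to 1-indexed `j = l+1 < k = m+1`): it acts as
`Re(A l m) • X - Im(A l m) • Y` on qubit `j` (0-indexed `l`), as `X` on qubits
`j+1, …, k-1` (0-indexed `l+1, …, m-1`), and as the identity elsewhere. -/
noncomputable def unaryOffTerm {n : ℕ} (A : Matrix (Fin n) (Fin n) ℂ) (l m : Fin n) :
    Matrix (Fin (n - 1) → Bool) (Fin (n - 1) → Bool) ℂ :=
  tensorOp fun i =>
    if (i : ℕ) = (l : ℕ) then ((A l m).re : ℂ) • pauliX - ((A l m).im : ℂ) • pauliY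
    else if (l : ℕ) < (i : ℕ) ∧ (i : ℕ) < (m : ℕ) then pauliX else 1

/-- The `(n-1)`-qubit operator `Q_A` of the unary embedding:
`Q_A = α₁ I + Σ_{j=2}^{n} (α_j - α_{j-1}) n̂_{j-1}
      + Σ_{1 ≤ j < k ≤ n} X_{k-1} ⊗ ⋯ ⊗ X_{j+1} ⊗ (α_{j,k} X_j - β_{j,k} Y_j)`. -/
noncomputable def unaryQ {n : ℕ} (hn : 2 ≤ n) (A : Matrix (Fin n) (Fin n) ℂ) :
    Matrix (Fin (n - 1) → Bool) (Fin (n - 1) → Bool) ℂ :=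
  A ⟨0, by omega⟩ ⟨0, by omega⟩ • 1 +
    (∑ j : Fin (n - 1),
      (A ⟨(j : ℕ) + 1, by have := j.isLt; omega⟩ ⟨(j : ℕ) + 1, by have := j.isLt; omega⟩ -
        A ⟨(j : ℕ), by have := j.isLt; omega⟩ ⟨(j : ℕ), by have := j.isLt; omega⟩) •
        siteOp numOp j) +
    ∑ l : Fin n, ∑ m : Fin n, if l < m then unaryOffTerm A l m else 0

lemma word_ne_iff (i l m : ℕ) :
    decide (i < l) ≠ decide (i < m) ↔ min l m ≤ i ∧ i < max l m := by
  simp only [ne_eq, decide_eq_decide]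
  omega

lemma word_eq' (i l m : ℕ) (h : ¬ (min l m ≤ i ∧ i < max l m)) :
    decide (i < l) = decide (i < m) := by
  simp only [decide_eq_decide]; omega

lemma word_ne' (i l m : ℕ) (h : min l m ≤ i ∧ i < max l m) :
    decide (i < l) ≠ decide (i < m) := by
  simp only [ne_eq, decide_eq_decide]; omega

lemma Mdiag (c : ℂ) (b : Bool) :
    ((c.re : ℂ) • pauliX - (c.im : ℂ) • pauliY) b b = 0 := by
  simp [pauliX, pauliY, Matrix.sub_apply, Matrix.smul_apply]

lemma numOp_apply (b c : Bool) : numOp b c = if b ∧ c then 1 else 0 := by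
  cases b <;> cases c <;>
    norm_num [numOp, pauliZ, Matrix.one_apply, Matrix.sub_apply, Matrix.smul_apply]

lemma siteOp_numOp_apply {m' : ℕ} (j : Fin m') (s t : Fin m' → Bool) :
    siteOp numOp j s t = if s = t ∧ s j = true then 1 else 0 := by
  unfold siteOp tensorOp
  by_cases h : s = t ∧ s j = true
  · obtain ⟨rfl, hj⟩ := h
    rw [if_pos ⟨rfl, hj⟩]
    apply Finset.prod_eq_one
    intro i _
    by_cases hij : i = j
    · subst hij; simp [numOp_apply, hj]
    · simp [hij, Matrix.one_apply]
  · rw [if_neg h]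
    by_cases hst : s = t
    · subst hst
      have hj : s j = false := by
        cases hsj : s j
        · rfl
        · exact absurd ⟨rfl, hsj⟩ h
      refine Finset.prod_eq_zero (Finset.mem_univ j) ?_
      simp [numOp_apply, hj]
    · obtain ⟨i, hi⟩ := Function.ne_iff.mp hst
      refine Finset.prod_eq_zero (Finset.mem_univ i) ?_
      by_cases hij : i = j
      · subst hij
        beta_reduce
        rw [if_pos rfl]
        cases hsi : s i <;> cases hti : t i <;> simp_all [numOp_apply]
      · simp [hij, Matrix.one_apply, hi]

lemma offTerm_diag {n : ℕ} (A : Matrix (Fin n) (Fin n) ℂ) (lo hi : Fin n)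
    (h : (lo : ℕ) < (hi : ℕ)) (s : Fin (n - 1) → Bool) :
    unaryOffTerm A lo hi s s = 0 := by
  have hlo1 : (lo : ℕ) < n - 1 := by have := hi.isLt; omega
  unfold unaryOffTerm tensorOp
  refine Finset.prod_eq_zero (Finset.mem_univ ⟨(lo : ℕ), hlo1⟩) ?_
  beta_reduce
  rw [if_pos rfl]
  exact Mdiag _ _

lemma offTerm_eval {n : ℕ} (A : Matrix (Fin n) (Fin n) ℂ) (lo hi l m : Fin n)
    (hlohi : (lo : ℕ) < (hi : ℕ)) (hlm : (l : ℕ) ≠ (m : ℕ)) :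
    unaryOffTerm A lo hi (unaryWord n l) (unaryWord n m) =
      if (lo : ℕ) = min (l : ℕ) (m : ℕ) ∧ (hi : ℕ) = max (l : ℕ) (m : ℕ) then
        (((A lo hi).re : ℂ) • pauliX - ((A lo hi).im : ℂ) • pauliY)
          (decide ((lo : ℕ) < (l : ℕ))) (decide ((lo : ℕ) < (m : ℕ)))
      else 0 := by
  have hhi : (hi : ℕ) ≤ n - 1 := by have := hi.isLt; omega
  have hlo1 : (lo : ℕ) < n - 1 := by omega
  set a := min (l : ℕ) (m : ℕ) with ha
  set b := max (l : ℕ) (m : ℕ) with hb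
  have hab : a < b := by omega
  have hbn : b ≤ n - 1 := by have := l.isLt; have := m.isLt; omega
  unfold unaryOffTerm tensorOp unaryWord
  by_cases hc : (lo : ℕ) = a ∧ (hi : ℕ) = b
  · rw [if_pos hc]
    obtain ⟨hca, hcb⟩ := hc
    rw [Finset.prod_eq_single (⟨(lo : ℕ), hlo1⟩ : Fin (n - 1)) ?_ ?_]
    · simp
    · intro i _ hne
      have hival : ¬ ((i : ℕ) = (lo : ℕ)) := fun h => hne (Fin.ext h)
      beta_reduce
      rw [if_neg hival]
      by_cases hx : (lo : ℕ) < (i : ℕ) ∧ (i : ℕ) < (hi : ℕ)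
      · rw [if_pos hx]
        have hne2 : decide ((i : ℕ) < (l : ℕ)) ≠ decide ((i : ℕ) < (m : ℕ)) :=
          word_ne' _ _ _ (by omega)
        simp only [pauliX]
        rw [if_neg hne2]
      · rw [if_neg hx]
        have heq2 : decide ((i : ℕ) < (l : ℕ)) = decide ((i : ℕ) < (m : ℕ)) :=
          word_eq' _ _ _ (by omega)
        rw [heq2]
        exact Matrix.one_apply_eq _
    · intro h; exact absurd (Finset.mem_univ _) h
  · rw [if_neg hc]
    by_cases h1 : (lo : ℕ) < a
    · refine Finset.prod_eq_zero (Finset.mem_univ (⟨(lo : ℕ), hlo1⟩ : Fin (n - 1))) ?_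
      beta_reduce
      simp only [Fin.val_mk]
      rw [if_pos trivial]
      have heq2 : decide ((lo : ℕ) < (l : ℕ)) = decide ((lo : ℕ) < (m : ℕ)) :=
        word_eq' _ _ _ (by omega)
      rw [heq2]
      exact Mdiag _ _
    · by_cases h2 : a < (lo : ℕ)
      · have han : a < n - 1 := by omega
        refine Finset.prod_eq_zero (Finset.mem_univ (⟨a, han⟩ : Fin (n - 1))) ?_
        beta_reduce
        simp only [Fin.val_mk]
        rw [if_neg (by omega : ¬ (a = (lo : ℕ))),
          if_neg (by omega : ¬ ((lo : ℕ) < a ∧ a < (hi : ℕ)))]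
        have hne2 : decide (a < (l : ℕ)) ≠ decide (a < (m : ℕ)) :=
          word_ne' _ _ _ (by omega)
        exact Matrix.one_apply_ne hne2
      · have hloa : (lo : ℕ) = a := by omega
        have hhib : (hi : ℕ) ≠ b := fun h => hc ⟨hloa, h⟩
        by_cases h3 : (hi : ℕ) < b
        · have hhn : (hi : ℕ) < n - 1 := by omega
          refine Finset.prod_eq_zero (Finset.mem_univ (⟨(hi : ℕ), hhn⟩ : Fin (n - 1))) ?_
          beta_reduce
          simp only [Fin.val_mk]
          rw [if_neg (by omega : ¬ ((hi : ℕ) = (lo : ℕ))),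
            if_neg (by omega : ¬ ((lo : ℕ) < (hi : ℕ) ∧ (hi : ℕ) < (hi : ℕ)))]
          have hne2 : decide ((hi : ℕ) < (l : ℕ)) ≠ decide ((hi : ℕ) < (m : ℕ)) :=
            word_ne' _ _ _ (by omega)
          exact Matrix.one_apply_ne hne2
        · have hb' : b < (hi : ℕ) := by omega
          have hbn1 : b < n - 1 := by omega
          refine Finset.prod_eq_zero (Finset.mem_univ (⟨b, hbn1⟩ : Fin (n - 1))) ?_
          beta_reduce
          simp only [Fin.val_mk]
          rw [if_neg (by omega : ¬ (b = (lo : ℕ))),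
            if_pos (⟨by omega, hb'⟩ : (lo : ℕ) < b ∧ b < (hi : ℕ))]
          have heq2 : decide (b < (l : ℕ)) = decide (b < (m : ℕ)) :=
            word_eq' _ _ _ (by omega)
          rw [heq2]
          simp [pauliX]

lemma Moff_ft (c : ℂ) :
    ((c.re : ℂ) • pauliX - (c.im : ℂ) • pauliY) false true = c := by
  show (c.re : ℂ) * pauliX false true - (c.im : ℂ) * pauliY false true = c
  have h1 : pauliX false true = 1 := by simp [pauliX]
  have h2 : pauliY false true = -Complex.I := by simp [pauliY]
  rw [h1, h2]
  linear_combination Complex.re_add_im c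

lemma Moff_tf (c : ℂ) :
    ((c.re : ℂ) • pauliX - (c.im : ℂ) • pauliY) true false = (starRingEnd ℂ) c := by
  show (c.re : ℂ) * pauliX true false - (c.im : ℂ) * pauliY true false = (starRingEnd ℂ) c
  have h1 : pauliX true false = 1 := by simp [pauliX]
  have h2 : pauliY true false = Complex.I := by simp [pauliY]
  rw [h1, h2]
  apply Complex.ext <;> simp


/-- **Unary embedding.** For an `n × n` Hermitian matrix `A` (`n ≥ 2`), the matrix elements
of the unary-embedding operator `Q_A` between unary codeword states reproduce `A`:
`⟨u_ℓ| Q_A |u_m⟩ = A_{ℓ m}` for all `ℓ, m`. -/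
theorem unary_embedding_matrix_elements (n : ℕ) (hn : 2 ≤ n)
    (A : Matrix (Fin n) (Fin n) ℂ) (hA : A.IsHermitian) :
    ∀ l m : Fin n, unaryQ hn A (unaryWord n l) (unaryWord n m) = A l m := by
  intro l m
  unfold unaryQ
  simp only [Matrix.add_apply, Matrix.smul_apply, Matrix.sum_apply, smul_eq_mul]
  rcases lt_trichotomy ((l : ℕ)) ((m : ℕ)) with hlt | heq | hgt
  · -- l < m
    have hwne : unaryWord n l ≠ unaryWord n m := by
      intro h
      have h2 := congrFun h ⟨(l : ℕ), by have := m.isLt; omega⟩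
      simp only [unaryWord, Fin.val_mk, decide_eq_decide] at h2
      omega
    rw [Matrix.one_apply_ne hwne]
    have hoff : ∀ l' m' : Fin n,
        (if l' < m' then unaryOffTerm A l' m' else 0) (unaryWord n l) (unaryWord n m)
          = if l' = l ∧ m' = m then A l m else 0 := by
      intro l' m'
      by_cases h : l' < m'
      · rw [if_pos h, offTerm_eval A l' m' l m (Fin.lt_def.mp h) (by omega)]
        rw [show min (l : ℕ) (m : ℕ) = (l : ℕ) by omega,
          show max (l : ℕ) (m : ℕ) = (m : ℕ) by omega]
        by_cases hc : (l' : ℕ) = (l : ℕ) ∧ (m' : ℕ) = (m : ℕ)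
        · rw [if_pos hc, if_pos ⟨Fin.ext hc.1, Fin.ext hc.2⟩]
          obtain ⟨h1, h2⟩ := hc
          have hl' : l' = l := Fin.ext h1
          have hm' : m' = m := Fin.ext h2
          subst hl' hm'
          rw [show decide ((l' : ℕ) < (l' : ℕ)) = false by simp,
            show decide ((l' : ℕ) < (m' : ℕ)) = true by simpa using hlt]
          exact Moff_ft (A l' m')
        · rw [if_neg hc, if_neg (by rintro ⟨rfl, rfl⟩; exact hc ⟨rfl, rfl⟩)]
      · rw [if_neg h, if_neg (by rintro ⟨rfl, rfl⟩; exact h (Fin.lt_def.mpr hlt)),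
          Matrix.zero_apply]
    simp only [hoff, siteOp_numOp_apply, hwne, false_and, if_false, mul_zero,
      Finset.sum_const_zero, zero_add]
    simp [Finset.sum_ite_eq', ite_and]
  · -- l = m
    have hlm : l = m := Fin.ext heq
    subst hlm
    rw [Matrix.one_apply_eq]
    have hoff : ∀ l' m' : Fin n,
        (if l' < m' then unaryOffTerm A l' m' else 0) (unaryWord n l) (unaryWord n l)
          = 0 := by
      intro l' m'
      by_cases h : l' < m'
      · rw [if_pos h]
        exact offTerm_diag A l' m' (Fin.lt_def.mp h) _
      · rw [if_neg h, Matrix.zero_apply]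
    simp only [hoff, Finset.sum_const_zero, add_zero]
    -- telescoping
    set g : ℕ → ℂ := fun j => if h : j < n then A ⟨j, h⟩ ⟨j, h⟩ else 0 with hg
    have hterm : ∀ j : Fin (n - 1),
        (A ⟨(j : ℕ) + 1, by have := j.isLt; omega⟩ ⟨(j : ℕ) + 1, by have := j.isLt; omega⟩ -
          A ⟨(j : ℕ), by have := j.isLt; omega⟩ ⟨(j : ℕ), by have := j.isLt; omega⟩) *
          siteOp numOp j (unaryWord n l) (unaryWord n l)
        = (fun k => if k < (l : ℕ) then g (k + 1) - g k else 0) (j : ℕ) := by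
      intro j
      have hj1 : (j : ℕ) + 1 < n := by have := j.isLt; omega
      have hj0 : (j : ℕ) < n := by omega
      rw [siteOp_numOp_apply]
      by_cases hjl : (j : ℕ) < (l : ℕ)
      · have hcond : unaryWord n l = unaryWord n l ∧ unaryWord n l j = true :=
          ⟨rfl, decide_eq_true hjl⟩
        rw [if_pos hcond, mul_one]
        beta_reduce
        rw [if_pos hjl, hg]
        beta_reduce
        rw [dif_pos hj1, dif_pos hj0]
      · have hcond : ¬ (unaryWord n l = unaryWord n l ∧ unaryWord n l j = true) :=
          fun h => hjl (of_decide_eq_true h.2)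
        rw [if_neg hcond, mul_zero]
        beta_reduce
        rw [if_neg hjl]
    rw [Finset.sum_congr rfl (fun j _ => hterm j),
      Fin.sum_univ_eq_sum_range (fun k => if k < (l : ℕ) then g (k + 1) - g k else 0) (n - 1)]
    have hsub : Finset.range (l : ℕ) ⊆ Finset.range (n - 1) :=
      Finset.range_subset_range.mpr (by have := l.isLt; omega)
    rw [← Finset.sum_subset hsub (fun
      x _ hx => by rw [if_neg (by simpa using hx)])]
    rw [Finset.sum_congr rfl (fun x hx => if_pos (Finset.mem_range.mp hx)),
      Finset.sum_range_sub g ((l : ℕ))]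
    have hgl : g (l : ℕ) = A l l := by
      rw [hg]; simp only [dif_pos l.isLt]
    have hg0 : g 0 = A ⟨0, by omega⟩ ⟨0, by omega⟩ := by
      rw [hg]; simp only [dif_pos (by omega : 0 < n)]
    rw [hgl, hg0]
    ring
  · -- m < l
    have hwne : unaryWord n l ≠ unaryWord n m := by
      intro h
      have h2 := congrFun h ⟨(m : ℕ), by have := l.isLt; omega⟩
      simp only [unaryWord, Fin.val_mk, decide_eq_decide] at h2
      omega
    rw [Matrix.one_apply_ne hwne]
    have hAlm : A l m = (starRingEnd ℂ) (A m l) := by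
      conv_lhs => rw [← hA]
      simp [Matrix.conjTranspose_apply]
    have hoff : ∀ l' m' : Fin n,
        (if l' < m' then unaryOffTerm A l' m' else 0) (unaryWord n l) (unaryWord n m)
          = if l' = m ∧ m' = l then A l m else 0 := by
      intro l' m'
      by_cases h : l' < m'
      · rw [if_pos h, offTerm_eval A l' m' l m (Fin.lt_def.mp h) (by omega)]
        rw [show min (l : ℕ) (m : ℕ) = (m : ℕ) by omega,
          show max (l : ℕ) (m : ℕ) = (l : ℕ) by omega]
        by_cases hc : (l' : ℕ) = (m : ℕ) ∧ (m' : ℕ) = (l : ℕ)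
        · rw [if_pos hc, if_pos ⟨Fin.ext hc.1, Fin.ext hc.2⟩]
          obtain ⟨h1, h2⟩ := hc
          have hl' : l' = m := Fin.ext h1
          have hm' : m' = l := Fin.ext h2
          subst hl' hm'
          rw [show decide ((l' : ℕ) < (m' : ℕ)) = true by simpa using hgt,
            show decide ((l' : ℕ) < (l' : ℕ)) = false by simp, hAlm]
          exact Moff_tf (A l' m')
        · rw [if_neg hc, if_neg (by rintro ⟨rfl, rfl⟩; exact hc ⟨rfl, rfl⟩)]
      · rw [if_neg h, if_neg (by rintro ⟨rfl, rfl⟩; exact h (Fin.lt_def.mpr hgt)),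
          Matrix.zero_apply]
    simp only [hoff, siteOp_numOp_apply, hwne, false_and, if_false, mul_zero,
      Finset.sum_const_zero, zero_add]
    simp [Finset.sum_ite_eq', ite_and]
end

section
/- (Circulant unary embedding) Let n ≥ 4 be an even integer and let C be the n × n adjacency matrix of the n-node cycle graph: C_{jk} = 1 if j − k ≡ ±1 (mod n) and C_{jk} = 0 otherwise. Define the (n/2)-qubit operator Q_C = Σ_{j=1}^{n/2} X_j. Then for all k, ℓ ∈ {1,…,n}, ⟨c_k| Q_C |c_ℓ⟩ = C_{kℓ}, where |c_j⟩ is the circulant unary codeword basis state. -/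
open Matrix

/-- The adjacency matrix of the `n`-node cycle graph: `C j k = 1` iff `j - k ≡ ±1 (mod n)`. -/
def cycleAdj (n : ℕ) : Matrix (Fin n) (Fin n) ℂ :=
  fun j k => if ((j : ℕ) + 1) % n = (k : ℕ) ∨ ((k : ℕ) + 1) % n = (j : ℕ) then 1 else 0

/-- The circulant unary codeword `c_j` on `n/2` qubits: for `j : Fin n` representing the
1-indexed integer `j+1`, if `j+1 ≤ n/2` the lowest `j` bits are `1` and the rest are `0`;
for `j+1 > n/2`, `c_{j+1}` is the bitwise negation of `c_{j+1-n/2}`. -/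
def circUnaryWord (n : ℕ) (j : Fin n) : Fin (n / 2) → Bool :=
  fun i =>
    if (j : ℕ) < n / 2 then decide ((i : ℕ) < (j : ℕ))
    else !(decide ((i : ℕ) < (j : ℕ) - n / 2))

/-- The `(n/2)`-qubit operator `Q_C = Σ_{j=1}^{n/2} X_j`. -/
noncomputable def circQ (n : ℕ) : Matrix (Fin (n / 2) → Bool) (Fin (n / 2) → Bool) ℂ :=
  ∑ j : Fin (n / 2), siteOp pauliX j

lemma word_iff (n : ℕ) (k : Fin n) (i : Fin (n/2)) :
    circUnaryWord n k i = true ↔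
      ((k:ℕ) < n/2 ∧ (i:ℕ) < (k:ℕ) ∨ n/2 ≤ (k:ℕ) ∧ (k:ℕ) - n/2 ≤ (i:ℕ)) := by
  unfold circUnaryWord
  split_ifs with h <;> simp <;> omega

lemma diff_iff (n : ℕ) (k l : Fin n) (i : Fin (n/2)) :
    circUnaryWord n k i ≠ circUnaryWord n l i ↔
      ¬(((k:ℕ) < n/2 ∧ (i:ℕ) < (k:ℕ) ∨ n/2 ≤ (k:ℕ) ∧ (k:ℕ) - n/2 ≤ (i:ℕ)) ↔
        ((l:ℕ) < n/2 ∧ (i:ℕ) < (l:ℕ) ∨ n/2 ≤ (l:ℕ) ∧ (l:ℕ) - n/2 ≤ (i:ℕ))) := by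
  rw [← word_iff, ← word_iff]
  constructor
  · intro h hiff
    exact h (Bool.coe_iff_coe.mp hiff)
  · intro h he
    exact h (by rw [he])

lemma mod_succ_iff (n a b : ℕ) (ha : a < n) (hb : b < n) :
    (a + 1) % n = b ↔ (a + 1 = b ∨ (a = n - 1 ∧ b = 0)) := by
  rcases Nat.lt_or_ge (a + 1) n with h | h
  · rw [Nat.mod_eq_of_lt h]; omega
  · have h1 : a + 1 = n := by omega
    rw [h1, Nat.mod_self]; omega

lemma back_nat (n k l : ℕ) (h2 : n % 2 = 0) (hn : 4 ≤ n) (hk : k < n) (hl : l < n)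
    (hadj : (k + 1 = l ∨ (k = n - 1 ∧ l = 0)) ∨ (l + 1 = k ∨ (l = n - 1 ∧ k = 0))) :
    ∃ jv : ℕ, jv < n/2 ∧ ∀ iv : ℕ, iv < n/2 →
      (¬((k < n/2 ∧ iv < k ∨ n/2 ≤ k ∧ k - n/2 ≤ iv) ↔
         (l < n/2 ∧ iv < l ∨ n/2 ≤ l ∧ l - n/2 ≤ iv)) ↔ iv = jv) := by
  rcases hadj with (h | h) | (h | h)
  · rcases Nat.lt_or_ge k (n/2) with hc | hc
    · exact ⟨k, by omega, fun iv hiv => by omega⟩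
    · exact ⟨k - n/2, by omega, fun iv hiv => by omega⟩
  · exact ⟨n/2 - 1, by omega, fun iv hiv => by omega⟩
  · rcases Nat.lt_or_ge l (n/2) with hc | hc
    · exact ⟨l, by omega, fun iv hiv => by omega⟩
    · exact ⟨l - n/2, by omega, fun iv hiv => by omega⟩
  · exact ⟨n/2 - 1, by omega, fun iv hiv => by omega⟩

lemma fwd_nat (n k l jj : ℕ) (h2 : n % 2 = 0) (hn : 4 ≤ n) (hk : k < n) (hl : l < n)
    (hjlt : jj < n/2)
    (hj : ∀ iv : ℕ, iv < n/2 →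
      (¬((k < n/2 ∧ iv < k ∨ n/2 ≤ k ∧ k - n/2 ≤ iv) ↔
         (l < n/2 ∧ iv < l ∨ n/2 ≤ l ∧ l - n/2 ≤ iv)) ↔ iv = jj)) :
    (k + 1 = l ∨ (k = n - 1 ∧ l = 0)) ∨ (l + 1 = k ∨ (l = n - 1 ∧ k = 0)) := by
  have h0 := hj 0 (by omega)
  have hm1 := hj (n/2-1) (by omega)
  have hjj := hj jj hjlt
  rcases Nat.lt_or_ge (jj + 1) (n/2) with hs | hs
  · have h1 := hj (jj+1) hs
    rcases Nat.lt_or_ge 0 jj with hp | hp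
    · have h2' := hj (jj-1) (by omega)
      omega
    · omega
  · rcases Nat.lt_or_ge 0 jj with hp | hp
    · have h2' := hj (jj-1) (by omega)
      omega
    · omega

lemma key (n : ℕ) (hn : 4 ≤ n) (heven : Even n) (k l : Fin n) :
    (∃ j : Fin (n/2), ∀ i : Fin (n/2),
        (circUnaryWord n k i ≠ circUnaryWord n l i ↔ i = j)) ↔
      (((k:ℕ) + 1) % n = (l:ℕ) ∨ ((l:ℕ) + 1) % n = (k:ℕ)) := by
  have h2 : n % 2 = 0 := Nat.even_iff.mp heven
  have hk := k.isLt
  have hl := l.isLt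
  rw [mod_succ_iff n _ _ hk hl, mod_succ_iff n _ _ hl hk]
  constructor
  · rintro ⟨j, hj⟩
    have hj' : ∀ iv : ℕ, iv < n/2 →
        (¬(((k:ℕ) < n/2 ∧ iv < (k:ℕ) ∨ n/2 ≤ (k:ℕ) ∧ (k:ℕ) - n/2 ≤ iv) ↔
           ((l:ℕ) < n/2 ∧ iv < (l:ℕ) ∨ n/2 ≤ (l:ℕ) ∧ (l:ℕ) - n/2 ≤ iv)) ↔ iv = (j:ℕ)) := by
      intro iv hiv
      have h := (diff_iff n k l ⟨iv, hiv⟩).symm.trans (hj ⟨iv, hiv⟩)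
      rw [Fin.ext_iff] at h
      exact h
    exact fwd_nat n k l (j:ℕ) h2 hn hk hl j.isLt hj'
  · intro hadj
    obtain ⟨jv, hjv, hprop⟩ := back_nat n (k:ℕ) (l:ℕ) h2 hn hk hl hadj
    refine ⟨⟨jv, hjv⟩, fun i => ?_⟩
    rw [diff_iff n k l i, Fin.ext_iff]
    exact hprop (i:ℕ) i.isLt

lemma siteOp_pauliX_apply {m : ℕ} (j : Fin m) (w w' : Fin m → Bool) :
    siteOp pauliX j w w' = if (∀ i, (w i ≠ w' i ↔ i = j)) then 1 else 0 := by
  unfold siteOp tensorOp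
  split_ifs with h
  · apply Finset.prod_eq_one
    intro i _
    beta_reduce
    by_cases hij : i = j
    · rw [if_pos hij]
      subst hij
      have hne : w i ≠ w' i := (h i).mpr rfl
      simp [pauliX, hne]
    · rw [if_neg hij]
      have hww : w i = w' i := by
        by_contra hne
        exact hij ((h i).mp hne)
      rw [hww]
      exact Matrix.one_apply_eq _
  · push_neg at h
    obtain ⟨i, hi⟩ := h
    apply Finset.prod_eq_zero (Finset.mem_univ i)
    beta_reduce
    by_cases hij : i = j
    · rw [if_pos hij]
      rcases hi with ⟨_, hij'⟩ | ⟨heq, _⟩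
      · exact absurd hij hij'
      · simp [pauliX, heq]
    · rw [if_neg hij]
      rcases hi with ⟨hne, _⟩ | ⟨_, hij'⟩
      · exact Matrix.one_apply_ne hne
      · exact absurd hij' hij

/-- **Circulant unary embedding.**
`Q_C = Σ_j X_j` between circulant unary codeword states reproduce the adjacency matrix of the
`n`-node cycle graph: `⟨c_k| Q_C |c_ℓ⟩ = C_{k ℓ}` for all `k, ℓ`. -/
theorem circulant_unary_embedding_matrix_elements (n : ℕ) (hn : 4 ≤ n) (heven : Even n) :
    ∀ k l : Fin n, circQ n (circUnaryWord n k) (circUnaryWord n l) = cycleAdj n k l := by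
  intro k l
  simp only [circQ, Matrix.sum_apply, siteOp_pauliX_apply]
  by_cases hex : ∃ j : Fin (n/2), ∀ i,
      (circUnaryWord n k i ≠ circUnaryWord n l i ↔ i = j)
  · obtain ⟨j0, hj0⟩ := hex
    rw [Finset.sum_eq_single j0]
    · rw [if_pos hj0]
      simp only [cycleAdj]
      rw [if_pos ((key n hn heven k l).mp ⟨j0, hj0⟩)]
    · intro j _ hne
      rw [if_neg]
      intro hcond
      exact hne ((hj0 j).mp ((hcond j).mpr rfl))
    · intro h
      exact absurd (Finset.mem_univ j0) h
  · rw [Finset.sum_eq_zero (fun j _ => if_neg (fun h => hex ⟨j, h⟩))]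
    simp only [cycleAdj]
    rw [if_neg (fun h => hex ((key n hn heven k l).mpr h))]
end

section
/- (One-hot embedding with penalty) Let n ≥ 2 and let A be an n × n complex Hermitian matrix, with diagonal entries α_j = A_{jj} for j = 1,…,n and off-diagonal entries A_{jk} = α_{j,k} + i β_{j,k} (α_{j,k}, β_{j,k} real) for 1 ≤ j < k ≤ n. Define the n-qubit operator Q_A = Σ_{j=1}^{n} α_j n̂_j + Σ_{1 ≤ j < k ≤ n} (α_{j,k} X_k ⊗ X_j + β_{j,k} X_k ⊗ Y_j), where X_k ⊗ X_j (resp. X_k ⊗ Y_j) acts as X on qubit k and X (resp. Y) on qubit j with identity on all other qubits. Then for all ℓ, m ∈ {1,…,n}, ⟨h_ℓ| Q_A |h_m⟩ = A_{ℓm}, where |h_j⟩ is the one-hot codeword basis state. -/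
open Matrix

/-- The one-hot codeword `h_j` on `n` qubits: exactly bit `j` is `1` (0-indexed `j : Fin n`,
representing the 1-indexed integer `j+1`). -/
def oneHotWord (n : ℕ) (j : Fin n) : Fin n → Bool := fun i => decide (i = j)

/-- The two-qubit operator acting as `M` on qubit `k` and `N` on qubit `j`, with identity on
all other qubits. -/
def twoSiteOp {q : ℕ} (M N : Matrix Bool Bool ℂ) (k j : Fin q) :
    Matrix (Fin q → Bool) (Fin q → Bool) ℂ :=
  tensorOp fun i => if i = k then M else if i = j then N else 1

/-- The `n`-qubit operator `Q_A` of the one-hot embedding: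
`Q_A = Σ_j α_j n̂_j + Σ_{1 ≤ j < k ≤ n} (α_{j,k} X_k ⊗ X_j + β_{j,k} X_k ⊗ Y_j)`. -/
noncomputable def oneHotQ {n : ℕ} (A : Matrix (Fin n) (Fin n) ℂ) :
    Matrix (Fin n → Bool) (Fin n → Bool) ℂ :=
  (∑ j : Fin n, A j j • siteOp numOp j) +
    ∑ l : Fin n, ∑ m : Fin n,
      if l < m then
        ((A l m).re : ℂ) • twoSiteOp pauliX pauliX m l +
          ((A l m).im : ℂ) • twoSiteOp pauliX pauliY m l
      else 0

lemma siteOp_numOp_entry {n : ℕ} (j l m : Fin n) :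
    siteOp numOp j (oneHotWord n l) (oneHotWord n m) =
      if j = l ∧ l = m then 1 else 0 := by
  unfold siteOp tensorOp
  by_cases hlm : l = m
  · subst hlm
    by_cases hjl : j = l
    · subst hjl
      simp only [if_pos (And.intro rfl rfl)]
      apply Finset.prod_eq_one
      intro i _
      by_cases hi : i = j
      · subst hi
        simp [oneHotWord, numOp, pauliZ, Matrix.smul_apply, Matrix.sub_apply,
          Matrix.one_apply]
        norm_num
      · simp [hi, oneHotWord, Matrix.one_apply]
    · rw [if_neg (by tauto)]
      apply Finset.prod_eq_zero (Finset.mem_univ j)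
      simp [oneHotWord, hjl, numOp, pauliZ, Matrix.smul_apply, Matrix.sub_apply,
        Matrix.one_apply]
  · rw [if_neg (by tauto)]
    by_cases hjl : j = l
    · apply Finset.prod_eq_zero (Finset.mem_univ m)
      have hmj : m ≠ j := by rw [hjl]; exact fun h => hlm h.symm
      simp [oneHotWord, hmj, Matrix.one_apply, Ne.symm hlm]
    · apply Finset.prod_eq_zero (Finset.mem_univ l)
      simp [oneHotWord, hjl, Matrix.one_apply, hlm, Ne.symm hjl]

lemma twoXX_entry {n : ℕ} (j k l m : Fin n) (hjk : j ≠ k) :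
    twoSiteOp pauliX pauliX k j (oneHotWord n l) (oneHotWord n m) =
      if (j = l ∧ k = m) ∨ (j = m ∧ k = l) then 1 else 0 := by
  unfold twoSiteOp tensorOp
  by_cases hlm : l = m
  · subst hlm
    rw [if_neg (by rintro (⟨rfl, rfl⟩ | ⟨rfl, rfl⟩) <;> exact hjk rfl)]
    apply Finset.prod_eq_zero (Finset.mem_univ k)
    simp [oneHotWord, pauliX]
  · by_cases hj : j = l ∨ j = m
    · by_cases hk : k = l ∨ k = m
      · -- {j,k} = {l,m} since j ≠ k
        rcases hj with rfl | rfl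
        · have hk' : k = m := by rcases hk with rfl | rfl; exact absurd rfl hjk; rfl
          subst hk'
          rw [if_pos (Or.inl ⟨rfl, rfl⟩)]
          apply Finset.prod_eq_one
          intro i _
          by_cases hik : i = k
          · subst hik; simp [oneHotWord, pauliX, Ne.symm hlm, hlm]
          · by_cases hij : i = j
            · subst hij; simp [oneHotWord, pauliX, hik, hlm]
            · simp [oneHotWord, hik, hij, Matrix.one_apply]
        · have hk' : k = l := by rcases hk with rfl | rfl; rfl; exact absurd rfl hjk
          subst hk'
          rw [if_pos (Or.inr ⟨rfl, rfl⟩)]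
          apply Finset.prod_eq_one
          intro i _
          by_cases hik : i = k
          · subst hik; simp [oneHotWord, pauliX, hlm]
          · by_cases hij : i = j
            · subst hij; simp [oneHotWord, pauliX, hik, Ne.symm hlm]
            · simp [oneHotWord, hik, hij, Matrix.one_apply]
      · push_neg at hk
        rw [if_neg (by rintro (⟨rfl, rfl⟩ | ⟨rfl, rfl⟩); exact hk.2 rfl; exact hk.1 rfl)]
        apply Finset.prod_eq_zero (Finset.mem_univ k)
        simp [oneHotWord, pauliX, hk.1, hk.2]
    · push_neg at hj
      rw [if_neg (by rintro (⟨rfl, rfl⟩ | ⟨rfl, rfl⟩); exact hj.1 rfl; exact hj.2 rfl)]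
      apply Finset.prod_eq_zero (Finset.mem_univ j)
      simp [oneHotWord, pauliX, hj.1, hj.2, Ne.symm hjk]

lemma twoXY_entry {n : ℕ} (j k l m : Fin n) (hjk : j ≠ k) :
    twoSiteOp pauliX pauliY k j (oneHotWord n l) (oneHotWord n m) =
      if j = l ∧ k = m then Complex.I else
        if j = m ∧ k = l then -Complex.I else 0 := by
  unfold twoSiteOp tensorOp
  by_cases hlm : l = m
  · subst hlm
    rw [if_neg (by rintro ⟨rfl, rfl⟩; exact hjk rfl),
      if_neg (by rintro ⟨rfl, rfl⟩; exact hjk rfl)]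
    apply Finset.prod_eq_zero (Finset.mem_univ k)
    simp [oneHotWord, pauliX]
  · by_cases hj : j = l ∨ j = m
    · by_cases hk : k = l ∨ k = m
      · rcases hj with rfl | rfl
        · have hk' : k = m := by rcases hk with rfl | rfl; exact absurd rfl hjk; rfl
          subst hk'
          rw [if_pos ⟨rfl, rfl⟩]
          rw [show (Complex.I) = (fun i : Fin n =>
            (if i = k then pauliX else if i = j then pauliY else 1)
              (oneHotWord n j i) (oneHotWord n k i)) j from ?_]
          · apply Finset.prod_eq_single
            · intro i _ hij
              by_cases hik : i = k
              · subst hik; simp [oneHotWord, pauliX, Ne.symm hlm, hlm]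
              · simp [oneHotWord, hik, hij, Matrix.one_apply]
            · intro h; exact absurd (Finset.mem_univ j) h
          · simp [oneHotWord, hjk, pauliY, hlm]
        · have hk' : k = l := by rcases hk with rfl | rfl; rfl; exact absurd rfl hjk
          subst hk'
          rw [if_neg (by rintro ⟨rfl, _⟩; exact hlm rfl), if_pos ⟨rfl, rfl⟩]
          rw [show (-Complex.I) = (fun i : Fin n =>
            (if i = k then pauliX else if i = j then pauliY else 1)
              (oneHotWord n k i) (oneHotWord n j i)) j from ?_]
          · apply Finset.prod_eq_single
            · intro i _ hij
              by_cases hik : i = k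
              · subst hik; simp [oneHotWord, pauliX, hlm]
              · simp [oneHotWord, hik, hij, Matrix.one_apply]
            · intro h; exact absurd (Finset.mem_univ j) h
          · simp [oneHotWord, hjk, pauliY, Ne.symm hlm]
      · push_neg at hk
        rw [if_neg (by rintro ⟨rfl, rfl⟩; exact hk.2 rfl),
          if_neg (by rintro ⟨rfl, rfl⟩; exact hk.1 rfl)]
        apply Finset.prod_eq_zero (Finset.mem_univ k)
        simp [oneHotWord, pauliX, hk.1, hk.2]
    · push_neg at hj
      rw [if_neg (by rintro ⟨rfl, rfl⟩; exact hj.1 rfl),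
        if_neg (by rintro ⟨rfl, rfl⟩; exact hj.2 rfl)]
      apply Finset.prod_eq_zero (Finset.mem_univ j)
      simp [oneHotWord, pauliY, hj.1, hj.2, hjk]

lemma double_sum_ite {n : ℕ} (l m : Fin n) (c : ℂ)
    (F : Fin n → Fin n → ℂ) (hF : ∀ j k, F j k = if j = l ∧ k = m then c else 0) :
    ∑ j : Fin n, ∑ k : Fin n, F j k = c := by
  simp only [hF]
  rw [Finset.sum_eq_single l]
  · rw [Finset.sum_eq_single m]
    · simp
    · intro b _ hb; simp [hb]
    · simp
  · intro b _ hb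
    apply Finset.sum_eq_zero
    intro k _
    simp [hb]
  · simp

/-- **One-hot embedding (with penalty).** For an `n × n` Hermitian matrix `A` (`n ≥ 2`), the
matrix elements of `Q_A` between one-hot codeword states reproduce `A`:
`⟨h_ℓ| Q_A |h_m⟩ = A_{ℓ m}` for all `ℓ, m`. -/
theorem oneHot_embedding_matrix_elements (n : ℕ) (hn : 2 ≤ n)
    (A : Matrix (Fin n) (Fin n) ℂ) (hA : A.IsHermitian) :
    ∀ l m : Fin n, oneHotQ A (oneHotWord n l) (oneHotWord n m) = A l m := by
  intro l m
  unfold oneHotQ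
  simp only [Matrix.add_apply, Matrix.sum_apply, Matrix.smul_apply, smul_eq_mul,
    apply_ite (fun M : Matrix (Fin n → Bool) (Fin n → Bool) ℂ =>
      M (oneHotWord n l) (oneHotWord n m)),
    Matrix.zero_apply, siteOp_numOp_entry]
  rcases lt_trichotomy l m with h | h | h
  · have h1 : ∑ j : Fin n, A j j * (if j = l ∧ l = m then 1 else 0) = 0 := by
      apply Finset.sum_eq_zero
      intro j _
      simp [h.ne]
    rw [h1, zero_add]
    apply double_sum_ite l m (A l m)
    intro j k
    by_cases hc : j < k
    · rw [if_pos hc, twoXX_entry j k l m hc.ne, twoXY_entry j k l m hc.ne]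
      by_cases h1 : j = l ∧ k = m
      · rw [if_pos (Or.inl h1), if_pos h1, if_pos h1, mul_one]
        obtain ⟨rfl, rfl⟩ := h1
        exact Complex.re_add_im _
      · have h2 : ¬(j = m ∧ k = l) := by
          rintro ⟨rfl, rfl⟩; exact lt_asymm h hc
        rw [if_neg (by tauto), if_neg h1, if_neg h2, if_neg h1]
        ring
    · rw [if_neg hc, if_neg (by rintro ⟨rfl, rfl⟩; exact hc h)]
  · subst h
    have h1 : ∑ j : Fin n, A j j * (if j = l ∧ l = l then 1 else 0) = A l l := by
      rw [Finset.sum_eq_single l]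
      · simp
      · intro b _ hb; simp [hb]
      · simp
    have h2 : ∑ j : Fin n, ∑ k : Fin n,
        (if j < k then
          ((A j k).re : ℂ) * twoSiteOp pauliX pauliX k j (oneHotWord n l) (oneHotWord n l) +
          ((A j k).im : ℂ) * twoSiteOp pauliX pauliY k j (oneHotWord n l) (oneHotWord n l)
          else 0) = 0 := by
      apply Finset.sum_eq_zero; intro j _
      apply Finset.sum_eq_zero; intro k _
      split_ifs with hc
      · rw [twoXX_entry j k l l hc.ne, twoXY_entry j k l l hc.ne]
        rw [if_neg (by rintro (⟨rfl, rfl⟩ | ⟨rfl, rfl⟩) <;> exact hc.ne rfl),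
          if_neg (by rintro ⟨rfl, rfl⟩; exact hc.ne rfl),
          if_neg (by rintro ⟨rfl, rfl⟩; exact hc.ne rfl)]
        ring
      · rfl
    rw [h1, h2, add_zero]
  · have h1 : ∑ j : Fin n, A j j * (if j = l ∧ l = m then 1 else 0) = 0 := by
      apply Finset.sum_eq_zero
      intro j _
      simp [h.ne']
    rw [h1, zero_add]
    have hval : A l m = ((A m l).re : ℂ) + ((A m l).im : ℂ) * (-Complex.I) := by
      rw [← hA.apply m l]
      apply Complex.ext <;> simp
    rw [hval]
    apply double_sum_ite m l _
    intro j k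
    by_cases hc : j < k
    · rw [if_pos hc, twoXX_entry j k l m hc.ne, twoXY_entry j k l m hc.ne]
      by_cases h1 : j = m ∧ k = l
      · rw [if_pos (Or.inr h1), if_neg (by rintro ⟨rfl, rfl⟩; exact lt_asymm h hc),
          if_pos h1, if_pos h1, mul_one]
        obtain ⟨rfl, rfl⟩ := h1; rfl
      · have h2 : ¬(j = l ∧ k = m) := by
          rintro ⟨rfl, rfl⟩; exact lt_asymm h hc
        rw [if_neg (by tauto), if_neg h2, if_neg h1, if_neg h1]
        ring
    · rw [if_neg hc, if_neg (by rintro ⟨rfl, rfl⟩; exact hc h)]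
end

section
/- (Unary penalty Hamiltonian spectrum) Let n ≥ 3 and define the (n−1)-qubit operator H^{pen}_{unary} = −Σ_{j=1}^{n−2} Z_{j+1} Z_j + Z_1 − Z_{n−1}. Then every unary codeword state |u_j⟩ (j = 1,…,n) is an eigenvector of H^{pen}_{unary} with eigenvalue −(n−2); this is the least eigenvalue of H^{pen}_{unary}; the eigenspace for eigenvalue −(n−2) is exactly span{|u_1⟩,…,|u_n⟩}; and every other eigenvalue of H^{pen}_{unary} is at least −(n−2) + 4 (i.e., the spectral gap between the ground and first excited energy levels equals 4). -/
open Matrix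

/-- The unary penalty Hamiltonian
`H^{pen}_{unary} = -Σ_{j=1}^{n-2} Z_{j+1} Z_j + Z_1 - Z_{n-1}` on `n-1` qubits. -/
noncomputable def unaryPen (n : ℕ) (hn : 3 ≤ n) :
    Matrix (Fin (n - 1) → Bool) (Fin (n - 1) → Bool) ℂ :=
  -(∑ j : Fin (n - 2),
      siteOp pauliZ (⟨(j : ℕ) + 1, by have := j.isLt; omega⟩ : Fin (n - 1)) *
        siteOp pauliZ ⟨(j : ℕ), by have := j.isLt; omega⟩) +
    siteOp pauliZ (⟨0, by omega⟩ : Fin (n - 1)) -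
    siteOp pauliZ (⟨n - 2, by omega⟩ : Fin (n - 1))

/-! The Hamiltonian is diagonal in the computational basis. Pad a bit string `s` on `n - 1`
qubits to `b₀ b₁ ⋯ bₙ` with `b₀ = 1`, `bₖ = s_{k-1}` and `bₙ = 0`; then `Z₁ = -Z(b₀) Z(b₁)` and
`-Z_{n-1} = -Z(b_{n-1}) Z(bₙ)`, so every one of the `n` terms is `-Z(bₖ) Z(bₖ₊₁) = ±1`, with sign
`+` exactly at a domain wall `bₖ ≠ bₖ₊₁`. The energy of `s` is therefore `2 w - n`, where `w` is
the number of domain walls of the padded string. Since `b₀ ≠ bₙ`, `w` is odd; `w = 1` exactly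
for the unary codewords, and all other strings have `w ≥ 3`, i.e. energy at least `-(n-2) + 4`,
which is attained by the string whose only `1` is its second bit. -/

open Finset

theorem diagonal_mulVec_eq_smul_iff {ι R : Type*} [Fintype ι] [DecidableEq ι] [CommRing R]
    [IsDomain R] (d v : ι → R) (μ : R) :
    diagonal d *ᵥ v = μ • v ↔ ∀ i, d i ≠ μ → v i = 0 := by
  simp only [funext_iff, mulVec_diagonal, Pi.smul_apply, smul_eq_mul, mul_eq_mul_right_iff]
  exact forall_congr' fun i => or_iff_not_imp_left

theorem diagonal_sum {ι κ R : Type*} [DecidableEq ι] [AddCommMonoid R] (t : Finset κ)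
    (d : κ → ι → R) : ∑ k ∈ t, diagonal (d k) = diagonal (∑ k ∈ t, d k) :=
  (map_sum (diagonalAddMonoidHom ι R) d t).symm

section ComputationalBasis

variable {m : ℕ}

theorem basisVec_eq_single (w : Fin m → Bool) : basisVec w = Pi.single w 1 := by
  ext s
  simp [basisVec, Pi.single_apply]

theorem basisVec_ne_zero (w : Fin m → Bool) : basisVec w ≠ 0 := by
  simp [basisVec_eq_single]

theorem basisVec_apply_of_ne {w s : Fin m → Bool} (h : s ≠ w) : basisVec w s = 0 := if_neg h

theorem mem_span_range_basisVec_iff {ι : Type*} (w : ι → Fin m → Bool)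
    (v : (Fin m → Bool) → ℂ) :
    v ∈ Submodule.span ℂ (Set.range fun j => basisVec (w j)) ↔
      ∀ s, s ∉ Set.range w → v s = 0 := by
  have hrange : (Set.range fun j => basisVec (w j)) = Pi.basisFun ℂ _ '' Set.range w := by
    rw [← Set.range_comp]
    simp [Function.comp_def, basisVec_eq_single]
  rw [hrange, Module.Basis.mem_span_image]
  simp only [Set.subset_def, Finset.mem_coe, Finsupp.mem_support_iff, Pi.basisFun_repr]
  exact forall_congr' fun s => not_imp_comm

def spin (b : Bool) : ℤ := if b then -1 else 1

@[simp] theorem spin_true : spin true = -1 := rfl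

@[simp] theorem spin_false : spin false = 1 := rfl

theorem pauliZ_eq_diagonal : pauliZ = diagonal fun b => (spin b : ℂ) := by
  ext a b
  cases a <;> cases b <;> simp [pauliZ, spin]

theorem tensorOp_diagonal (g : Fin m → Bool → ℂ) :
    tensorOp (fun i => diagonal (g i)) = diagonal fun s => ∏ i, g i (s i) := by
  ext s t
  by_cases h : s = t
  · subst h; simp [tensorOp]
  · obtain ⟨i, hi⟩ := Function.ne_iff.mp h
    rw [diagonal_apply_ne _ h]
    exact Finset.prod_eq_zero (Finset.mem_univ i) (diagonal_apply_ne _ hi)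

theorem siteOp_pauliZ (j : Fin m) : siteOp pauliZ j = diagonal fun s => (spin (s j) : ℂ) := by
  have hfactors : (fun i => if i = j then pauliZ else 1) =
      fun i => diagonal fun b => if i = j then (spin b : ℂ) else 1 := by
    ext i : 1
    split_ifs
    · exact pauliZ_eq_diagonal
    · exact diagonal_one.symm
  rw [siteOp, hfactors, tensorOp_diagonal]
  simp

end ComputationalBasis

section DomainWalls

variable (f : ℕ → Bool)

def domainWalls (N : ℕ) : ℕ := #{k ∈ range N | f k ≠ f (k + 1)}

@[simp] theorem domainWalls_zero : domainWalls f 0 = 0 := rfl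

theorem domainWalls_succ (N : ℕ) :
    domainWalls f (N + 1) = domainWalls f N + if f N = f (N + 1) then 0 else 1 := by
  by_cases h : f N = f (N + 1)
  · simp [domainWalls, range_add_one, filter_insert, h]
  · simp [domainWalls, range_add_one, filter_insert, h, card_insert_of_notMem]

theorem even_domainWalls_iff (N : ℕ) : Even (domainWalls f N) ↔ f 0 = f N := by
  induction N with
  | zero => simp
  | succ N ih =>
    rw [domainWalls_succ]
    split_ifs with h
    · rwa [add_zero, ← h]
    · rw [Nat.even_add_one, ih]
      revert h
      cases f 0 <;> cases f N <;> cases f (N + 1) <;> simp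

theorem sum_neg_spin_mul_spin (N : ℕ) :
    ∑ k ∈ range N, -(spin (f k) * spin (f (k + 1))) = 2 * domainWalls f N - N := by
  induction N with
  | zero => simp
  | succ N ih =>
    rw [sum_range_succ, ih, domainWalls_succ]
    cases f N <;> cases f (N + 1) <;> simp <;> ring

theorem eq_of_forall_eq_succ {α : Type*} {g : ℕ → α} {a b : ℕ} (hab : a ≤ b)
    (h : ∀ k, a ≤ k → k < b → g k = g (k + 1)) : g a = g b := by
  induction b, hab using Nat.le_induction with
  | base => rfl
  | succ b hb ih => rw [ih fun k hk hkb => h k hk (by omega), h b hb (by omega)]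

theorem exists_of_domainWalls_eq_one {N : ℕ} (h : domainWalls f N = 1) :
    ∃ j < N, ∀ k ≤ N, f k = if k ≤ j then f 0 else f N := by
  obtain ⟨j, hj⟩ := card_eq_one.mp h
  simp only [Finset.ext_iff, mem_filter, mem_range, mem_singleton] at hj
  have hjN : j < N := ((hj j).2 rfl).1
  have hflat : ∀ k < N, k ≠ j → f k = f (k + 1) := fun k hk hkj =>
    not_not.mp fun hwall => hkj ((hj k).1 ⟨hk, hwall⟩)
  refine ⟨j, hjN, fun k hk => ?_⟩
  split_ifs with hkj
  · exact (eq_of_forall_eq_succ (Nat.zero_le k) fun i _ hi => hflat i (by omega) (by omega)).symm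
  · exact eq_of_forall_eq_succ hk fun i hi hiN => hflat i hiN (by omega)

end DomainWalls

section UnaryPenalty

variable {n : ℕ}

def padWord (n : ℕ) (s : Fin (n - 1) → Bool) (k : ℕ) : Bool :=
  if h : 0 < k ∧ k < n then s ⟨k - 1, by omega⟩ else decide (k = 0)

theorem padWord_zero (s : Fin (n - 1) → Bool) : padWord n s 0 = true := by
  simp [padWord]

theorem padWord_self (hn : 0 < n) (s : Fin (n - 1) → Bool) : padWord n s n = false := by
  rw [padWord, dif_neg (by omega), decide_eq_false_iff_not]
  omega

theorem padWord_succ (s : Fin (n - 1) → Bool) (i : Fin (n - 1)) :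
    padWord n s (i + 1) = s i := by
  rw [padWord, dif_pos (by omega)]
  rfl

def unaryEnergy (n : ℕ) (s : Fin (n - 1) → Bool) : ℤ := 2 * domainWalls (padWord n s) n - n

theorem unaryEnergy_eq_sum (hn : 2 ≤ n) (s : Fin (n - 1) → Bool) :
    unaryEnergy n s =
      -(∑ k ∈ range (n - 2), spin (padWord n s (k + 1)) * spin (padWord n s (k + 1 + 1)))
      + spin (padWord n s 1) - spin (padWord n s (n - 1)) := by
  obtain ⟨m, rfl⟩ : ∃ m, n = m + 2 := ⟨n - 2, by omega⟩
  rw [unaryEnergy, ← sum_neg_spin_mul_spin, sum_range_succ, sum_range_succ', padWord_zero,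
    padWord_self (by omega) s, Nat.add_sub_cancel, show m + 2 - 1 = m + 1 from rfl,
    sum_neg_distrib]
  simp only [spin_true, spin_false]
  ring

theorem unaryPen_eq_diagonal (hn : 3 ≤ n) :
    unaryPen n hn = diagonal fun s => (unaryEnergy n s : ℂ) := by
  simp only [unaryPen, siteOp_pauliZ, diagonal_mul_diagonal]
  rw [diagonal_sum, diagonal_neg, diagonal_add, diagonal_sub]
  congr 1
  ext s
  simp only [Finset.sum_apply, ← padWord_succ]
  rw [unaryEnergy_eq_sum (by omega) s, show n - 2 + 1 = n - 1 by omega, zero_add,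
    Fin.sum_univ_eq_sum_range
      (fun k => (spin (padWord n s (k + 1 + 1)) * spin (padWord n s (k + 1)) : ℂ))]
  push_cast
  simp only [mul_comm]

theorem padWord_unaryWord (j : Fin n) (k : ℕ) : padWord n (unaryWord n j) k = decide (k ≤ j) := by
  have := j.isLt
  unfold padWord unaryWord
  split_ifs <;> simp only [decide_eq_decide] <;> omega

theorem domainWalls_padWord_unaryWord (j : Fin n) :
    domainWalls (padWord n (unaryWord n j)) n = 1 := by
  have := j.isLt
  rw [domainWalls, card_eq_one]
  refine ⟨j, ?_⟩
  ext k
  simp only [padWord_unaryWord, mem_filter, mem_range, mem_singleton, ne_eq, decide_eq_decide]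
  omega

theorem mem_range_unaryWord_of_domainWalls_eq_one {s : Fin (n - 1) → Bool}
    (h : domainWalls (padWord n s) n = 1) : s ∈ Set.range (unaryWord n) := by
  obtain ⟨j, hjn, hpad⟩ := exists_of_domainWalls_eq_one _ h
  refine ⟨⟨j, hjn⟩, funext fun i => ?_⟩
  rw [← padWord_succ s i, hpad _ (by omega), padWord_zero, padWord_self (by omega) s,
    unaryWord]
  by_cases hij : (i : ℕ) < j <;> simp [hij]

theorem odd_domainWalls_padWord (hn : 0 < n) (s : Fin (n - 1) → Bool) :
    Odd (domainWalls (padWord n s) n) := by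
  rw [← Nat.not_even_iff_odd, even_domainWalls_iff, padWord_zero, padWord_self hn s]
  decide

theorem unaryEnergy_eq_iff_mem_range (s : Fin (n - 1) → Bool) :
    unaryEnergy n s = 2 - n ↔ s ∈ Set.range (unaryWord n) := by
  refine ⟨fun h => mem_range_unaryWord_of_domainWalls_eq_one ?_, ?_⟩
  · rw [unaryEnergy] at h
    omega
  · rintro ⟨j, rfl⟩
    rw [unaryEnergy, domainWalls_padWord_unaryWord]
    ring

theorem le_unaryEnergy_of_ne (hn : 0 < n) {s : Fin (n - 1) → Bool} (hs : unaryEnergy n s ≠ 2 - n) :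
    6 - n ≤ unaryEnergy n s := by
  obtain ⟨w, hw⟩ := odd_domainWalls_padWord hn s
  rw [unaryEnergy] at hs ⊢
  omega

def excitedWord (n : ℕ) : Fin (n - 1) → Bool := fun i => decide ((i : ℕ) = 1)

theorem unaryEnergy_excitedWord (hn : 3 ≤ n) : unaryEnergy n (excitedWord n) = 6 - n := by
  have hpad : ∀ k, padWord n (excitedWord n) k = decide (k = 0 ∨ k = 2) := by
    intro k
    unfold padWord excitedWord
    split_ifs <;> simp only [decide_eq_decide] <;> omega
  have hwalls : {k ∈ range n | padWord n (excitedWord n) k ≠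
      padWord n (excitedWord n) (k + 1)} = {0, 1, 2} := by
    ext k
    simp only [hpad, mem_filter, mem_range, mem_insert, mem_singleton, ne_eq, decide_eq_decide]
    omega
  rw [unaryEnergy, domainWalls, hwalls]
  rfl

end UnaryPenalty

/-- **Spectrum of the unary penalty Hamiltonian.** For `n ≥ 3`:
every unary codeword state is an eigenvector with eigenvalue `-(n-2)`; every eigenvalue is
either `-(n-2)` or real and at least `-(n-2)+4` (in particular `-(n-2)` is the least
eigenvalue); the `-(n-2)`-eigenspace is exactly the span of the unary codeword states; and
`-(n-2)+4` is attained, so the spectral gap equals `4`. -/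
theorem unary_penalty_spectrum (n : ℕ) (hn : 3 ≤ n) :
    (∀ j : Fin n,
        (unaryPen n hn).mulVec (basisVec (unaryWord n j)) =
          (-((n : ℂ) - 2)) • basisVec (unaryWord n j)) ∧
      (∀ μ : ℂ,
        (∃ v : (Fin (n - 1) → Bool) → ℂ, v ≠ 0 ∧ (unaryPen n hn).mulVec v = μ • v) →
          μ = -((n : ℂ) - 2) ∨ ∃ r : ℝ, μ = (r : ℂ) ∧ -((n : ℝ) - 2) + 4 ≤ r) ∧
      ({v : (Fin (n - 1) → Bool) → ℂ | (unaryPen n hn).mulVec v = (-((n : ℂ) - 2)) • v} =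
        (Submodule.span ℂ (Set.range fun j : Fin n => basisVec (unaryWord n j)) : Set _)) ∧
      (∃ v : (Fin (n - 1) → Bool) → ℂ, v ≠ 0 ∧
        (unaryPen n hn).mulVec v = (-((n : ℂ) - 2) + 4) • v) := by
  have hground : ∀ s, (unaryEnergy n s : ℂ) = -((n : ℂ) - 2) ↔ s ∈ Set.range (unaryWord n) := by
    intro s
    rw [← unaryEnergy_eq_iff_mem_range, neg_sub, ← Int.cast_inj (α := ℂ)]
    push_cast
    rfl
  simp only [unaryPen_eq_diagonal, diagonal_mulVec_eq_smul_iff]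
  refine ⟨fun j s hs => basisVec_apply_of_ne fun h => hs ((hground s).2 ⟨j, h.symm⟩), ?_, ?_, ?_⟩
  · rintro μ ⟨v, hv0, hv⟩
    obtain ⟨s, hs⟩ := Function.ne_iff.mp hv0
    obtain rfl : (unaryEnergy n s : ℂ) = μ := not_imp_comm.mp (hv s) hs
    by_cases hE : unaryEnergy n s = 2 - n
    · left
      rw [hE, neg_sub]
      push_cast
      rfl
    · refine Or.inr ⟨unaryEnergy n s, (Complex.ofReal_intCast _).symm, ?_⟩
      have hexcited : ((6 - n : ℤ) : ℝ) ≤ unaryEnergy n s :=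
        mod_cast le_unaryEnergy_of_ne (by omega) hE
      push_cast at hexcited
      linarith
  · ext v
    simp only [Set.mem_ofPred_eq, SetLike.mem_coe, mem_span_range_basisVec_iff, ne_eq, hground]
  · refine ⟨basisVec (excitedWord n), basisVec_ne_zero _, fun s hs => basisVec_apply_of_ne ?_⟩
    rintro rfl
    exact hs (by rw [unaryEnergy_excitedWord hn]; push_cast; ring)
end
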